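/- Let m ≥ 3 and let v₁,…,v_{m+3} be pairwise orthogonal roots of the lattice D_{2m+1}. Let M be the ℤ-span of v₁,…,v_{m+3} and let M' be the primitive closure of M in D_{2m+1}. Then the index [M' : M] is at least 4. -/

import Mathlib

/-- The lattice `Dₙ`: the subgroup `{x ∈ ℤⁿ : x₁ + ⋯ + xₙ is even}` of `ℤⁿ`,
equipped (implicitly) with the standard Euclidean bilinear form `⟨x,y⟩ = ∑ xᵢyᵢ`. -/
def DLat (n : ℕ) : AddSubgroup (Fin n → ℤ) where
  carrier := {x | Even (∑ i, x i)}
  zero_mem' := by simp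
  add_mem' := by
    intro a b ha hb
    simpa [Finset.sum_add_distrib] using ha.add hb
  neg_mem' := by
    intro a ha
    simpa using ha.neg

/-- The primitive closure of a subgroup `M` inside the lattice `Dₙ`:
`M' = {x ∈ Dₙ : kx ∈ M for some nonzero integer k}`. -/
def primClosure (n : ℕ) (M : AddSubgroup (Fin n → ℤ)) : AddSubgroup (Fin n → ℤ) where
  carrier := {x | x ∈ DLat n ∧ ∃ k : ℤ, k ≠ 0 ∧ k • x ∈ M}
  zero_mem' := ⟨(DLat n).zero_mem, 1, one_ne_zero, by simpa using M.zero_mem⟩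
  add_mem' := by
    rintro a b ⟨haD, k, hk, hka⟩ ⟨hbD, l, hl, hlb⟩
    refine ⟨(DLat n).add_mem haD hbD, k * l, mul_ne_zero hk hl, ?_⟩
    have h1 : (k * l) • (a + b) = l • (k • a) + k • (l • b) := by
      rw [smul_add, smul_smul, smul_smul, mul_comm l k]
    rw [h1]
    exact M.add_mem (M.zsmul_mem hka l) (M.zsmul_mem hlb k)
  neg_mem' := by
    rintro a ⟨haD, k, hk, hka⟩
    exact ⟨(DLat n).neg_mem haD, k, hk, by simpa [smul_neg] using M.neg_mem hka⟩

/-!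
A root of `ℤⁿ` has exactly two nonzero entries, both `±1`, so mod `2` it is the indicator of its
support. Orthogonality then forces two roots that meet in a coordinate `a` to have the same
support, and `w a • w + w' a • w' = 2 • eₐ`; in particular at most two of the `vₖ` are nonzero at
any coordinate. Double counting `∑ₐ #{k | vₖ a ≠ 0} = 2 (m + 3)` gives at least five coordinates
`a` with `2 • eₐ ∈ M`, and at least three distinct columns `(vₖ a mod 2)ₖ` among them.

Since `⟨∑ cₖ • vₖ, vₗ⟩ = 2 cₗ`, the map `x ↦ (⟨x, vₖ⟩ mod 2)ₖ` has kernel exactly `M` on `M'`, so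
`[M' : M]` is the order of its image in `(ℤ/2)^(m+3)`. For three coordinates with distinct columns
`cᵢ`, the vectors `e_{a₁} + e_{a₂}` and `e_{a₁} + e_{a₃}` lie in `M'` and have the distinct nonzero
images `c₁ + c₂` and `c₁ + c₃`.
-/

open Finset

namespace IntRoot

variable {ι : Type*} [Fintype ι] {w w' w'' : ι → ℤ} {a : ι}

def coordSupport (w : ι → ℤ) : Finset ι := {i | w i ≠ 0}

@[simp] lemma mem_coordSupport {i : ι} : i ∈ coordSupport w ↔ w i ≠ 0 := by
  simp [coordSupport]

lemma apply_eq_one_or_eq_neg_one (hw : w ⬝ᵥ w = 2) {i : ι} (hi : w i ≠ 0) :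
    w i = 1 ∨ w i = -1 := by
  have hle : w i * w i ≤ 2 :=
    hw ▸ single_le_sum (f := fun j => w j * w j) (fun j _ => mul_self_nonneg (w j)) (mem_univ i)
  have : -1 ≤ w i ∧ w i ≤ 1 := by constructor <;> nlinarith
  omega

lemma mul_self_apply_eq_one (hw : w ⬝ᵥ w = 2) {i : ι} (hi : w i ≠ 0) : w i * w i = 1 := by
  rcases apply_eq_one_or_eq_neg_one hw hi with h | h <;> simp [h]

lemma card_coordSupport (hw : w ⬝ᵥ w = 2) : #(coordSupport w) = 2 := by
  have hsum : w ⬝ᵥ w = #(coordSupport w) := by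
    rw [dotProduct, ← sum_subset (subset_univ (coordSupport w)), card_eq_sum_ones, Nat.cast_sum]
    · exact sum_congr rfl fun i hi => mul_self_apply_eq_one hw (mem_coordSupport.1 hi)
    · intro i _ hi
      simp [not_not.1 (mem_coordSupport.not.1 hi)]
  exact_mod_cast hsum.symm.trans hw

lemma exists_coordSupport_eq_pair [DecidableEq ι] (hw : w ⬝ᵥ w = 2) (ha : w a ≠ 0) :
    ∃ b, a ≠ b ∧ coordSupport w = {a, b} := by
  have ha' : a ∈ coordSupport w := mem_coordSupport.2 ha
  obtain ⟨b, hb⟩ := card_eq_one.1 <| by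
    rw [card_erase_of_mem ha', card_coordSupport hw]
  refine ⟨b, fun hab => ?_, by rw [← insert_erase ha', hb]⟩
  have hb' : b ∈ (coordSupport w).erase a := hb ▸ mem_singleton_self b
  exact ne_of_mem_erase hb' hab.symm

lemma intCast_apply_eq_ite (hw : w ⬝ᵥ w = 2) (i : ι) :
    (w i : ZMod 2) = if w i ≠ 0 then 1 else 0 := by
  split_ifs with hi
  · rcases apply_eq_one_or_eq_neg_one hw hi with h | h <;> simp [h]
  · simp [not_not.1 hi]

lemma intCast_dotProduct (hw : w ⬝ᵥ w = 2) (hw' : w' ⬝ᵥ w' = 2) :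
    ((w ⬝ᵥ w' : ℤ) : ZMod 2) = #{i | w i ≠ 0 ∧ w' i ≠ 0} := by
  simp only [dotProduct, Int.cast_sum, Int.cast_mul, intCast_apply_eq_ite hw,
    intCast_apply_eq_ite hw', ite_zero_mul_ite_zero, mul_one, sum_boole]

/-- Orthogonality forces the common support to have even size, and it has size `1` or `2`. -/
lemma coordSupport_eq_of_dotProduct_eq_zero (hw : w ⬝ᵥ w = 2) (hw' : w' ⬝ᵥ w' = 2)
    (ho : w ⬝ᵥ w' = 0) (ha : w a ≠ 0) (ha' : w' a ≠ 0) : coordSupport w = coordSupport w' := by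
  classical
  have hinter : coordSupport w ∩ coordSupport w' = ({i | w i ≠ 0 ∧ w' i ≠ 0} : Finset ι) := by
    ext; simp
  have heven : (#(coordSupport w ∩ coordSupport w') : ZMod 2) = 0 := by
    rw [hinter, ← intCast_dotProduct hw hw', ho, Int.cast_zero]
  have hpos : 0 < #(coordSupport w ∩ coordSupport w') :=
    card_pos.2 ⟨a, mem_inter.2 ⟨mem_coordSupport.2 ha, mem_coordSupport.2 ha'⟩⟩
  have hle := card_le_card (inter_subset_left (s₁ := coordSupport w) (s₂ := coordSupport w'))
  have htwo : #(coordSupport w ∩ coordSupport w') = 2 := by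
    rw [card_coordSupport hw] at hle
    interval_cases h : #(coordSupport w ∩ coordSupport w')
    · exact absurd heven (by decide)
    · rfl
  have hleft : coordSupport w ∩ coordSupport w' = coordSupport w :=
    eq_of_subset_of_card_le inter_subset_left (by rw [htwo, card_coordSupport hw])
  have hright : coordSupport w ∩ coordSupport w' = coordSupport w' :=
    eq_of_subset_of_card_le inter_subset_right (by rw [htwo, card_coordSupport hw'])
  exact hleft.symm.trans hright

lemma dotProduct_eq_of_coordSupport_eq_pair [DecidableEq ι] {b : ι} (hab : a ≠ b)
    (h : coordSupport w' = {a, b}) : w ⬝ᵥ w' = w a * w' a + w b * w' b := by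
  rw [dotProduct, ← sum_subset (subset_univ {a, b}), sum_pair hab]
  intro i _ hi
  rw [← h, mem_coordSupport, not_not] at hi
  rw [hi, mul_zero]

lemma apply_smul_add_apply_smul [DecidableEq ι] (hw : w ⬝ᵥ w = 2) (hw' : w' ⬝ᵥ w' = 2)
    (ho : w ⬝ᵥ w' = 0) (ha : w a ≠ 0) (ha' : w' a ≠ 0) :
    w a • w + w' a • w' = (2 : ℤ) • Pi.single a 1 := by
  obtain ⟨b, hab, hsupp⟩ := exists_coordSupport_eq_pair hw ha
  have hsupp' : coordSupport w' = {a, b} :=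
    coordSupport_eq_of_dotProduct_eq_zero hw hw' ho ha ha' ▸ hsupp
  have hb : w b ≠ 0 := mem_coordSupport.1 (hsupp ▸ mem_insert_of_mem (mem_singleton_self b))
  have hpair : w a * w' a + w b * w' b = 0 :=
    (dotProduct_eq_of_coordSupport_eq_pair hab hsupp').symm.trans ho
  ext i
  simp only [Pi.add_apply, Pi.smul_apply, smul_eq_mul, Pi.single_apply]
  by_cases hia : i = a
  · subst hia
    rw [mul_self_apply_eq_one hw ha, mul_self_apply_eq_one hw' ha', if_pos rfl]
    norm_num
  by_cases hib : i = b
  · subst hib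
    rw [if_neg hia]
    -- the entries at `a` and `b` are units, so `hpair` can be multiplied through by them
    linear_combination (w' a * w i) * hpair - (w a * w i) * mul_self_apply_eq_one hw' ha' -
      (w' a * w' i) * mul_self_apply_eq_one hw hb
  · have hi : i ∉ coordSupport w := by simp [hsupp, hia, hib]
    have hi' : i ∉ coordSupport w' := by simp [hsupp', hia, hib]
    rw [mem_coordSupport, not_not] at hi hi'
    simp [hi, hi', hia]

/-- By `apply_smul_add_apply_smul`, `w'` and `w''` would be proportional. -/
lemma false_of_pairwise_dotProduct_eq_zero [DecidableEq ι] (hw : w ⬝ᵥ w = 2)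
    (hw' : w' ⬝ᵥ w' = 2) (hw'' : w'' ⬝ᵥ w'' = 2) (ho : w ⬝ᵥ w' = 0) (ho' : w ⬝ᵥ w'' = 0)
    (ho'' : w' ⬝ᵥ w'' = 0) (ha : w a ≠ 0) (ha' : w' a ≠ 0) (ha'' : w'' a ≠ 0) : False := by
  have hsmul : w' a • w' = w'' a • w'' :=
    add_left_cancel ((apply_smul_add_apply_smul hw hw' ho ha ha').trans
      (apply_smul_add_apply_smul hw hw'' ho' ha ha'').symm)
  have hw''_eq : w'' = (w'' a * w' a) • w' := by
    rw [mul_smul, hsmul, smul_smul, mul_self_apply_eq_one hw'' ha'', one_smul]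
  rw [hw''_eq, dotProduct_smul, hw', smul_eq_mul] at ho''
  exact mul_ne_zero (mul_ne_zero ha'' ha') two_ne_zero ho''

end IntRoot

open IntRoot

section

variable {ι κ : Type*} [Fintype ι]

structure IsOrthogonalRoots (v : κ → ι → ℤ) : Prop where
  dotProduct_self : ∀ k, v k ⬝ᵥ v k = 2
  pairwise_orthogonal : Pairwise fun k l => v k ⬝ᵥ v l = 0

def sharedCoords [Fintype κ] (v : κ → ι → ℤ) : Finset ι := {a | 2 ≤ #{k | v k a ≠ 0}}

def parityMap (v : κ → ι → ℤ) : (ι → ℤ) →+ (κ → ZMod 2) where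
  toFun x k := ((x ⬝ᵥ v k : ℤ) : ZMod 2)
  map_zero' := by ext; simp
  map_add' x y := by ext; simp [add_dotProduct]

@[simp] lemma parityMap_apply (v : κ → ι → ℤ) (x : ι → ℤ) (k : κ) :
    parityMap v x k = ((x ⬝ᵥ v k : ℤ) : ZMod 2) := rfl

lemma parityMap_single [DecidableEq ι] (v : κ → ι → ℤ) (a : ι) :
    parityMap v (Pi.single a 1) = fun k => (v k a : ZMod 2) := by
  ext k; simp

variable [Fintype κ] {v : κ → ι → ℤ}

lemma sum_card_filter_apply_ne_zero (hroot : ∀ k, v k ⬝ᵥ v k = 2) :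
    ∑ a, #{k | v k a ≠ 0} = 2 * Fintype.card κ := by
  calc ∑ a, #{k | v k a ≠ 0} = ∑ k, #{a | v k a ≠ 0} :=
        sum_card_bipartiteAbove_eq_sum_card_bipartiteBelow (fun a k => v k a ≠ 0)
    _ = ∑ _k : κ, 2 := sum_congr rfl fun k _ => card_coordSupport (hroot k)
    _ = 2 * Fintype.card κ := by rw [sum_const, card_univ, smul_eq_mul, mul_comm]

/-- Every coordinate with the same column mod `2` as `a₀` lies in `coordSupport (v k)`. -/
lemma card_filter_intCast_eq_le_two (hroot : ∀ k, v k ⬝ᵥ v k = 2) {a₀ : ι} {k : κ}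
    (hk : v k a₀ ≠ 0) :
    #{a | (fun l => (v l a : ZMod 2)) = fun l => (v l a₀ : ZMod 2)} ≤ 2 := by
  refine (card_le_card fun a ha => ?_).trans (card_coordSupport (hroot k)).le
  have hcast := congrFun (mem_filter.1 ha).2 k
  rw [mem_coordSupport]
  intro h
  simp [intCast_apply_eq_ite (hroot k), h, hk] at hcast

lemma card_sharedCoords_le_two_mul_card_image (hroot : ∀ k, v k ⬝ᵥ v k = 2) :
    #(sharedCoords v) ≤ 2 * #((sharedCoords v).image fun a l => (v l a : ZMod 2)) := by
  refine card_le_mul_card_image _ _ fun c hc => ?_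
  obtain ⟨a₀, ha₀, rfl⟩ := mem_image.1 hc
  obtain ⟨k, hk⟩ := card_pos.1 (lt_of_lt_of_le two_pos (mem_filter.1 ha₀).2)
  exact (card_le_card (filter_subset_filter _ (subset_univ _))).trans
    (card_filter_intCast_eq_le_two hroot (mem_filter.1 hk).2)

namespace IsOrthogonalRoots

lemma card_filter_apply_ne_zero_le_two [DecidableEq ι] (hv : IsOrthogonalRoots v) (a : ι) :
    #{k | v k a ≠ 0} ≤ 2 := by
  by_contra! h
  obtain ⟨k, l, j, hk, hl, hj, hkl, hkj, hlj⟩ := two_lt_card_iff.1 h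
  simp only [mem_filter, mem_univ, true_and] at hk hl hj
  exact false_of_pairwise_dotProduct_eq_zero (hv.dotProduct_self k) (hv.dotProduct_self l)
    (hv.dotProduct_self j) (hv.pairwise_orthogonal hkl) (hv.pairwise_orthogonal hkj)
    (hv.pairwise_orthogonal hlj) hk hl hj

lemma two_mul_card_le_card_add_card_sharedCoords [DecidableEq ι] (hv : IsOrthogonalRoots v) :
    2 * Fintype.card κ ≤ Fintype.card ι + #(sharedCoords v) := by
  calc 2 * Fintype.card κ = ∑ a, #{k | v k a ≠ 0} :=
        (sum_card_filter_apply_ne_zero hv.dotProduct_self).symm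
    _ ≤ ∑ a, (1 + if 2 ≤ #{k | v k a ≠ 0} then 1 else 0) := by
        refine sum_le_sum fun a _ => ?_
        have := hv.card_filter_apply_ne_zero_le_two a
        split_ifs <;> omega
    _ = Fintype.card ι + #(sharedCoords v) := by
        rw [sum_add_distrib, sum_boole, sum_const, card_univ, smul_eq_mul, mul_one, Nat.cast_id,
          sharedCoords]

lemma two_smul_single_mem_closure [DecidableEq ι] (hv : IsOrthogonalRoots v) {a : ι}
    (ha : a ∈ sharedCoords v) : (2 : ℤ) • Pi.single a 1 ∈ AddSubgroup.closure (Set.range v) := by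
  obtain ⟨k, hk, l, hl, hkl⟩ := one_lt_card.1 (mem_filter.1 ha).2
  simp only [mem_filter, mem_univ, true_and] at hk hl
  rw [← apply_smul_add_apply_smul (hv.dotProduct_self k) (hv.dotProduct_self l)
    (hv.pairwise_orthogonal hkl) hk hl]
  exact add_mem (zsmul_mem (AddSubgroup.subset_closure (Set.mem_range_self k)) _)
    (zsmul_mem (AddSubgroup.subset_closure (Set.mem_range_self l)) _)

lemma sum_smul_dotProduct (hv : IsOrthogonalRoots v) (c : κ → ℤ) (l : κ) :
    (∑ k, c k • v k) ⬝ᵥ v l = 2 * c l := by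
  rw [sum_dotProduct, sum_eq_single l
      (fun k _ hkl => by rw [smul_dotProduct, hv.pairwise_orthogonal hkl, smul_zero])
      (fun h => absurd (mem_univ l) h),
    smul_dotProduct, hv.dotProduct_self, smul_eq_mul, mul_comm]

lemma mem_closure_range_iff_parityMap_eq_zero (hv : IsOrthogonalRoots v) {x : ι → ℤ} {m : ℤ}
    (hm : m ≠ 0) (hmx : m • x ∈ AddSubgroup.closure (Set.range v)) :
    x ∈ AddSubgroup.closure (Set.range v) ↔ parityMap v x = 0 := by
  simp only [AddSubgroup.mem_closure_range_iff_of_fintype] at hmx ⊢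
  constructor
  · rintro ⟨c, rfl⟩
    ext l
    rw [parityMap_apply, hv.sum_smul_dotProduct]
    exact ZMod.intCast_eq_zero_iff_even.2 (even_two_mul (c l))
  · intro hx
    obtain ⟨c, hc⟩ := hmx
    have heven (l : κ) : Even (x ⬝ᵥ v l) := ZMod.intCast_eq_zero_iff_even.1 (congrFun hx l)
    choose d hd using heven
    refine ⟨d, smul_right_injective _ hm ?_⟩
    change m • x = m • ∑ l, d l • v l
    rw [hc, smul_sum]
    refine sum_congr rfl fun l _ => ?_
    have hcl : 2 * c l = 2 * (m * d l) := by
      rw [← hv.sum_smul_dotProduct, ← hc, smul_dotProduct, hd, smul_eq_mul]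
      ring
    rw [smul_smul, mul_left_cancel₀ two_ne_zero hcl]

end IsOrthogonalRoots

end

lemma four_le_natCard_addSubgroup_of_mem {G : Type*} [AddCommGroup G] [Module (ZMod 2) G]
    [Finite G] {H : AddSubgroup G} {p q : G} (hp : p ≠ 0) (hq : q ≠ 0) (hpq : p ≠ q)
    (hpH : p ∈ H) (hqH : q ∈ H) : 4 ≤ Nat.card H := by
  classical
  have hpq' : p + q ≠ 0 := by rw [← ZModModule.sub_eq_add]; exact sub_ne_zero.2 hpq
  have hsub : (({0, p, q, p + q} : Finset G) : Set G) ⊆ H := by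
    simp [Set.insert_subset_iff, H.zero_mem, hpH, hqH, H.add_mem hpH hqH]
  have hcard : #({0, p, q, p + q} : Finset G) = 4 := by
    rw [card_eq_four]
    exact ⟨0, p, q, p + q, hp.symm, hq.symm, hpq'.symm, hpq, fun h => hq (by simpa using h),
      fun h => hp (by simpa using h), rfl⟩
  rw [← hcard, ← Set.ncard_coe_finset, ← Nat.card_coe_set_eq]
  exact Set.ncard_le_ncard hsub (Set.toFinite _)

section DLattice

variable {n : ℕ} {κ : Type*} [Fintype κ] {v : κ → Fin n → ℤ}

lemma single_add_single_mem_primClosure {M : AddSubgroup (Fin n → ℤ)} {a b : Fin n}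
    (ha : (2 : ℤ) • Pi.single a 1 ∈ M) (hb : (2 : ℤ) • Pi.single b 1 ∈ M) :
    Pi.single a 1 + Pi.single b 1 ∈ primClosure n M := by
  refine ⟨?_, 2, two_ne_zero, by rw [smul_add]; exact M.add_mem ha hb⟩
  show Even (∑ i, (Pi.single a 1 + Pi.single b 1 : Fin n → ℤ) i)
  simp [sum_add_distrib]

namespace IsOrthogonalRoots

lemma addSubgroupOf_primClosure_eq_ker (hv : IsOrthogonalRoots v) :
    (AddSubgroup.closure (Set.range v)).addSubgroupOf
        (primClosure n (AddSubgroup.closure (Set.range v))) =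
      ((parityMap v).comp (primClosure n (AddSubgroup.closure (Set.range v))).subtype).ker := by
  ext ⟨x, -, m, hm, hmx⟩
  exact hv.mem_closure_range_iff_parityMap_eq_zero hm hmx

lemma four_le_index_addSubgroupOf_primClosure (hv : IsOrthogonalRoots v) {s : Finset (Fin n)}
    (hs : ∀ a ∈ s, (2 : ℤ) • Pi.single a 1 ∈ AddSubgroup.closure (Set.range v))
    (hcols : 3 ≤ #(s.image fun a l => (v l a : ZMod 2))) :
    4 ≤ ((AddSubgroup.closure (Set.range v)).addSubgroupOf
        (primClosure n (AddSubgroup.closure (Set.range v)))).index := by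
  rw [hv.addSubgroupOf_primClosure_eq_ker, AddSubgroup.index_ker]
  obtain ⟨c₁, c₂, c₃, hc₁, hc₂, hc₃, h₁₂, h₁₃, h₂₃⟩ := two_lt_card_iff.1 hcols
  obtain ⟨a₁, ha₁, rfl⟩ := mem_image.1 hc₁
  obtain ⟨a₂, ha₂, rfl⟩ := mem_image.1 hc₂
  obtain ⟨a₃, ha₃, rfl⟩ := mem_image.1 hc₃
  have hmem (a b : Fin n) (ha : a ∈ s) (hb : b ∈ s) :
      parityMap v (Pi.single a 1 + Pi.single b 1) ∈
        ((parityMap v).comp (primClosure n (AddSubgroup.closure (Set.range v))).subtype).range :=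
    ⟨⟨_, single_add_single_mem_primClosure (hs a ha) (hs b hb)⟩, rfl⟩
  refine four_le_natCard_addSubgroup_of_mem ?_ ?_ ?_ (hmem a₁ a₂ ha₁ ha₂) (hmem a₁ a₃ ha₁ ha₃)
  all_goals simp only [map_add, parityMap_single]
  · rw [← ZModModule.sub_eq_add]; exact sub_ne_zero.2 h₁₂
  · rw [← ZModModule.sub_eq_add]; exact sub_ne_zero.2 h₁₃
  · exact fun h => h₂₃ (add_left_cancel h)

end IsOrthogonalRoots

end DLattice

theorem index_primitive_closure_D_odd_general (m : ℕ)
    (v : Fin (m + 3) → (Fin (2 * m + 1) → ℤ))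
    (hroot : ∀ k, ∑ i, v k i * v k i = 2)
    (horth : ∀ k l, k ≠ l → ∑ i, v k i * v l i = 0) :
    4 ≤ ((AddSubgroup.closure (Set.range v)).addSubgroupOf
        (primClosure (2 * m + 1) (AddSubgroup.closure (Set.range v)))).index := by
  have hv : IsOrthogonalRoots v := ⟨hroot, horth⟩
  have hshared := hv.two_mul_card_le_card_add_card_sharedCoords
  have hfibers := card_sharedCoords_le_two_mul_card_image hroot
  simp only [Fintype.card_fin] at hshared
  exact hv.four_le_index_addSubgroupOf_primClosure (fun a ha => hv.two_smul_single_mem_closure ha)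
    (by omega)

/-- Let `m ≥ 3` and let `v₁,…,v_{m+3}` be pairwise orthogonal roots of the lattice
`D_{2m+1}`.  Let `M` be the `ℤ`-span of `v₁,…,v_{m+3}` and let `M'` be the primitive closure
of `M` in `D_{2m+1}`.  Then the index `[M' : M]` is at least 4. -/
theorem index_primitive_closure_D_odd (m : ℕ) (hm : 3 ≤ m)
    (v : Fin (m + 3) → (Fin (2 * m + 1) → ℤ))
    (hmem : ∀ k, v k ∈ DLat (2 * m + 1))
    (hroot : ∀ k, ∑ i, v k i * v k i = 2)
    (horth : ∀ k l, k ≠ l → ∑ i, v k i * v l i = 0) :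
    4 ≤ ((AddSubgroup.closure (Set.range v)).addSubgroupOf
        (primClosure (2 * m + 1) (AddSubgroup.closure (Set.range v)))).index :=
  index_primitive_closure_D_odd_general m v hroot horth
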